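/- arXiv:1010.1163 — 2 statements merged into one kernel-verified Lean document; each statement's English description precedes it below -/
import Mathlib

section
/- Let M ≥ 1, let x : Fin M → ℂ be injective (distinct constellation points), and let σ > 1. Then the constellation-constrained secrecy capacity function C_σ attains a global maximum at a finite SNR: there exists s* ∈ [0, ∞) such that C_σ(s) ≤ C_σ(s*) for every s ∈ [0, ∞). -/
open MeasureTheory Real

/-- The standard complex Gaussian probability measure on ℂ:
density `w ↦ (1/π)·exp(−|w|²)` with respect to Lebesgue measure on ℂ ≅ ℝ². -/
noncomputable def gaussianC : Measure ℂ :=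
  MeasureTheory.volume.withDensity
    (fun w => ENNReal.ofReal (π⁻¹ * Real.exp (-(‖w‖) ^ 2)))

/-- The expectation term
`g_i(σ, s) = ∫_ℂ log₂( Σ_j exp( −|σ·w + √s·(x i − x j)|² / σ² ) ) dγ(w)`. -/
noncomputable def g (M : ℕ) (x : Fin M → ℂ) (σ s : ℝ) (i : Fin M) : ℝ :=
  ∫ w : ℂ,
    Real.logb 2 (∑ j : Fin M,
      Real.exp (-(‖(σ : ℂ) * w + (Real.sqrt s : ℂ) * (x i - x j)‖) ^ 2 / σ ^ 2))
    ∂gaussianC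

/-- The constellation-constrained secrecy capacity
`C_σ(s) = (1/M)·Σ_i ( g_i(σ, s) − g_i(1, s) )`. -/
noncomputable def Ccc (M : ℕ) (x : Fin M → ℂ) (σ s : ℝ) : ℝ :=
  (1 / (M : ℝ)) * ∑ i : Fin M, (g M x σ s i - g M x 1 s i)

/-!
`C_σ` is continuous in `s`, vanishes at `s = 0`, and tends to `0` as `s → ∞`: for distinct
constellation points every term `j ≠ i` of the inner sum tends to `0`, and the surviving term
`exp (-|w|²)` no longer depends on `σ`. Continuity and the limit both come from dominated
convergence, with the `γ`-integrable bound `|log₂ Σⱼ …| ≤ log₂ M + |w|² / log 2`. A continuous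
function on `[0, ∞)` whose value at `0` is at least its limit at infinity attains its maximum.
-/

open Filter Topology Set

theorem ContinuousOn.exists_isMaxOn_Ici_of_tendsto {α β : Type*}
    [ConditionallyCompleteLinearOrder α] [TopologicalSpace α] [OrderTopology α]
    [LinearOrder β] [TopologicalSpace β] [OrderTopology β]
    {f : α → β} {a : α} {L : β} (hf : ContinuousOn f (Ici a))
    (hlim : Tendsto f atTop (𝓝 L)) (ha : L ≤ f a) : ∃ s ∈ Ici a, IsMaxOn f (Ici a) s := by
  by_cases h : ∃ b ∈ Ici a, L < f b
  · obtain ⟨b, hb, hLb⟩ := h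
    have : Nonempty α := ⟨a⟩
    obtain ⟨R, hR⟩ := eventually_atTop.1 (hlim.eventually_lt_const hLb)
    refine hf.exists_isMaxOn' isClosed_Ici hb ?_
    filter_upwards [mem_inf_of_left (isCompact_Icc (a := a) (b := R)).compl_mem_cocompact,
      mem_inf_of_right (mem_principal_self (Ici a))] with y hyK hya
    exact (hR y (not_le.1 fun hyR => hyK ⟨hya, hyR⟩).le).le
  · push Not at h
    exact ⟨a, self_mem_Ici, fun b hb => (h b hb).trans ha⟩

section Gaussian

variable {V : Type*} [NormedAddCommGroup V] [InnerProductSpace ℝ V] [FiniteDimensional ℝ V]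
  [MeasurableSpace V] [BorelSpace V]

theorem integrable_exp_neg_mul_sq_norm {b : ℝ} (hb : 0 < b) :
    Integrable fun v : V => exp (-b * ‖v‖ ^ 2) :=
  Integrable.of_integral_ne_zero <| by
    rw [GaussianFourier.integral_rexp_neg_mul_sq_norm hb]; positivity

theorem integrable_sq_norm_mul_exp_neg_sq_norm :
    Integrable fun v : V => ‖v‖ ^ 2 * exp (-‖v‖ ^ 2) := by
  refine ((integrable_exp_neg_mul_sq_norm (V := V) (b := 1 / 2) (by norm_num)).const_mul 2).mono
    (by fun_prop) (ae_of_all _ fun v => ?_)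
  have hle : ‖v‖ ^ 2 ≤ 2 * exp (‖v‖ ^ 2 / 2) := by
    linarith [add_one_le_exp (‖v‖ ^ 2 / 2)]
  rw [norm_of_nonneg (by positivity), norm_of_nonneg (by positivity)]
  calc ‖v‖ ^ 2 * exp (-‖v‖ ^ 2) ≤ 2 * exp (‖v‖ ^ 2 / 2) * exp (-‖v‖ ^ 2) := by gcongr
    _ = 2 * exp (-(1 / 2) * ‖v‖ ^ 2) := by rw [mul_assoc, ← exp_add]; ring_nf

end Gaussian

theorem integrable_gaussianC_iff {f : ℂ → ℝ} :
    Integrable f gaussianC ↔ Integrable fun w => f w * (π⁻¹ * exp (-‖w‖ ^ 2)) := by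
  rw [gaussianC,
    integrable_withDensity_iff (by fun_prop) (ae_of_all _ fun _ => ENNReal.ofReal_lt_top)]
  refine integrable_congr (ae_of_all _ fun w => ?_)
  simp only [ENNReal.toReal_ofReal (by positivity : (0 : ℝ) ≤ π⁻¹ * exp (-‖w‖ ^ 2))]

instance : IsFiniteMeasure gaussianC := by
  have h : Integrable fun w : ℂ => π⁻¹ * exp (-‖w‖ ^ 2) := by
    simpa using (integrable_exp_neg_mul_sq_norm (V := ℂ) one_pos).const_mul π⁻¹
  exact isFiniteMeasure_withDensity_ofReal h.2

theorem integrable_sq_norm_gaussianC : Integrable (fun w : ℂ => ‖w‖ ^ 2) gaussianC := by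
  rw [integrable_gaussianC_iff]
  simpa [mul_left_comm] using integrable_sq_norm_mul_exp_neg_sq_norm.const_mul π⁻¹

theorem tendsto_norm_add_smul_atTop {E : Type*} [NormedAddCommGroup E] [NormedSpace ℝ E]
    (v : E) {d : E} (hd : d ≠ 0) : Tendsto (fun t : ℝ => ‖v + t • d‖) atTop atTop := by
  refine tendsto_atTop_mono (fun t => ?_)
    (tendsto_atTop_add_const_right _ (-‖v‖) (tendsto_id.atTop_mul_const (norm_pos_iff.2 hd)))
  have h := norm_sub_le (v + t • d) v
  rw [add_sub_cancel_left, norm_smul, norm_eq_abs] at h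
  dsimp only [id]
  nlinarith [le_abs_self t, norm_nonneg d]

theorem norm_ofReal_mul_sq_div_sq {σ : ℝ} (hσ : σ ≠ 0) (w : ℂ) :
    ‖(σ : ℂ) * w‖ ^ 2 / σ ^ 2 = ‖w‖ ^ 2 := by
  rw [norm_mul, Complex.norm_real, norm_eq_abs, mul_pow, sq_abs]
  field_simp

noncomputable def sumExp (M : ℕ) (x : Fin M → ℂ) (σ s : ℝ) (i : Fin M) (w : ℂ) : ℝ :=
  ∑ j : Fin M, exp (-(‖(σ : ℂ) * w + (√s : ℂ) * (x i - x j)‖) ^ 2 / σ ^ 2)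

section sumExp

variable {M : ℕ} {x : Fin M → ℂ} {σ s : ℝ} {i : Fin M} {w : ℂ}

theorem g_eq_integral_logb_sumExp :
    g M x σ s i = ∫ w, logb 2 (sumExp M x σ s i w) ∂gaussianC := rfl

theorem sumExp_eq_add_sum_erase (hσ : σ ≠ 0) :
    sumExp M x σ s i w = exp (-‖w‖ ^ 2) +
      ∑ j ∈ Finset.univ.erase i, exp (-‖(σ : ℂ) * w + (√s : ℂ) * (x i - x j)‖ ^ 2 / σ ^ 2) := by
  rw [sumExp, ← Finset.add_sum_erase _ _ (Finset.mem_univ i), sub_self, mul_zero, add_zero,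
    neg_div, norm_ofReal_mul_sq_div_sq hσ]

theorem exp_neg_sq_norm_le_sumExp (hσ : σ ≠ 0) : exp (-‖w‖ ^ 2) ≤ sumExp M x σ s i w := by
  rw [sumExp_eq_add_sum_erase hσ]
  exact le_add_of_nonneg_right (Finset.sum_nonneg fun j _ => (exp_pos _).le)

theorem sumExp_pos (hσ : σ ≠ 0) : 0 < sumExp M x σ s i w :=
  (exp_pos _).trans_le (exp_neg_sq_norm_le_sumExp hσ)

theorem sumExp_le_card : sumExp M x σ s i w ≤ M := by
  refine (Finset.sum_le_card_nsmul _ _ 1 fun j _ => exp_le_one_iff.2 ?_).trans_eq (by simp)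
  exact div_nonpos_of_nonpos_of_nonneg (neg_nonpos.2 (sq_nonneg _)) (sq_nonneg _)

theorem abs_logb_sumExp_le (hσ : σ ≠ 0) :
    |logb 2 (sumExp M x σ s i w)| ≤ logb 2 M + ‖w‖ ^ 2 / log 2 := by
  have hlower : -‖w‖ ^ 2 / log 2 ≤ logb 2 (sumExp M x σ s i w) :=
    calc -‖w‖ ^ 2 / log 2 = logb 2 (exp (-‖w‖ ^ 2)) := by rw [logb, log_exp]
      _ ≤ _ := logb_le_logb_of_le one_lt_two (exp_pos _) (exp_neg_sq_norm_le_sumExp hσ)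
  have hupper : logb 2 (sumExp M x σ s i w) ≤ logb 2 M :=
    logb_le_logb_of_le one_lt_two (sumExp_pos hσ) sumExp_le_card
  have hM : (1 : ℝ) ≤ M := by exact_mod_cast i.pos
  rw [abs_le, neg_add, ← neg_div]
  constructor <;>
    linarith [logb_nonneg one_lt_two hM, div_nonneg (sq_nonneg ‖w‖) (log_pos one_lt_two).le]

theorem continuous_sumExp_right : Continuous (sumExp M x σ s i) := by
  unfold sumExp; fun_prop

theorem continuous_sumExp_left : Continuous fun s => sumExp M x σ s i w := by
  unfold sumExp; fun_prop

theorem tendsto_sumExp_atTop (hσ : σ ≠ 0) (hx : Function.Injective x) :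
    Tendsto (fun s => sumExp M x σ s i w) atTop (𝓝 (exp (-‖w‖ ^ 2))) := by
  have hoff : ∀ j ∈ Finset.univ.erase i, Tendsto
      (fun s => exp (-‖(σ : ℂ) * w + (√s : ℂ) * (x i - x j)‖ ^ 2 / σ ^ 2)) atTop (𝓝 0) := by
    intro j hj
    have hnorm : Tendsto (fun s => ‖(σ : ℂ) * w + (√s : ℂ) * (x i - x j)‖) atTop atTop := by
      have hd : x i - x j ≠ 0 := sub_ne_zero.2 (hx.ne (Finset.ne_of_mem_erase hj).symm)
      simpa only [Function.comp_def, Complex.real_smul] using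
        (tendsto_norm_add_smul_atTop _ hd).comp tendsto_sqrt_atTop
    exact tendsto_exp_atBot.comp ((tendsto_neg_atTop_atBot.comp
      ((tendsto_pow_atTop two_ne_zero).comp hnorm)).atBot_div_const (by positivity))
  simp_rw [sumExp_eq_add_sum_erase hσ]
  simpa using tendsto_const_nhds.add (tendsto_finsetSum _ hoff)

theorem sumExp_zero (hσ : σ ≠ 0) : sumExp M x σ 0 i w = sumExp M x 1 0 i w := by
  simp only [sumExp, sqrt_zero, Complex.ofReal_zero, zero_mul, add_zero, neg_div,
    norm_ofReal_mul_sq_div_sq hσ, norm_ofReal_mul_sq_div_sq one_ne_zero]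

end sumExp

theorem integrable_logb_card_add_sq_norm_div_gaussianC (M : ℕ) :
    Integrable (fun w : ℂ => logb 2 M + ‖w‖ ^ 2 / log 2) gaussianC :=
  (integrable_const _).add (integrable_sq_norm_gaussianC.div_const _)

section g

variable {M : ℕ} {x : Fin M → ℂ} {σ : ℝ}

theorem continuous_g (hσ : σ ≠ 0) (i : Fin M) : Continuous fun s => g M x σ s i := by
  simp only [g_eq_integral_logb_sumExp]
  refine continuous_of_dominated (bound := fun w => logb 2 M + ‖w‖ ^ 2 / log 2)
    (fun s => (continuous_sumExp_right.logb fun w => (sumExp_pos hσ).ne').aestronglyMeasurable)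
    (fun s => ae_of_all _ fun w => abs_logb_sumExp_le hσ)
    (integrable_logb_card_add_sq_norm_div_gaussianC M)
    (ae_of_all _ fun w => continuous_sumExp_left.logb fun s => (sumExp_pos hσ).ne')

theorem tendsto_g_atTop (hσ : σ ≠ 0) (hx : Function.Injective x) (i : Fin M) :
    Tendsto (fun s => g M x σ s i) atTop (𝓝 (∫ w, logb 2 (exp (-‖w‖ ^ 2)) ∂gaussianC)) := by
  simp only [g_eq_integral_logb_sumExp]
  refine tendsto_integral_filter_of_dominated_convergence
    (fun w => logb 2 M + ‖w‖ ^ 2 / log 2)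
    (.of_forall fun s =>
      (continuous_sumExp_right.logb fun w => (sumExp_pos hσ).ne').aestronglyMeasurable)
    (.of_forall fun s => ae_of_all _ fun w => abs_logb_sumExp_le hσ)
    (integrable_logb_card_add_sq_norm_div_gaussianC M)
    (ae_of_all _ fun w => (tendsto_sumExp_atTop hσ hx).logb (exp_pos _).ne')

theorem g_zero (hσ : σ ≠ 0) (i : Fin M) : g M x σ 0 i = g M x 1 0 i := by
  simp only [g_eq_integral_logb_sumExp, sumExp_zero hσ]

end g

section Ccc

variable {M : ℕ} {x : Fin M → ℂ} {σ : ℝ}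

theorem continuous_Ccc (hσ : σ ≠ 0) : Continuous fun s => Ccc M x σ s :=
  continuous_const.mul <| continuous_finsetSum _ fun i _ =>
    (continuous_g hσ i).sub (continuous_g one_ne_zero i)

theorem tendsto_Ccc_atTop (hσ : σ ≠ 0) (hx : Function.Injective x) :
    Tendsto (fun s => Ccc M x σ s) atTop (𝓝 0) := by
  unfold Ccc
  have h := (tendsto_const_nhds (x := 1 / (M : ℝ))).mul <| tendsto_finsetSum Finset.univ
    fun i _ => (tendsto_g_atTop (x := x) hσ hx i).sub (tendsto_g_atTop one_ne_zero hx i)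
  simpa only [sub_self, Finset.sum_const_zero, mul_zero] using h

theorem Ccc_zero (hσ : σ ≠ 0) : Ccc M x σ 0 = 0 := by
  simp [Ccc, g_zero hσ]

end Ccc

theorem ccsc_global_max_general (M : ℕ) (x : Fin M → ℂ)
    (hx : Function.Injective x) (σ : ℝ) (hσ : 1 < σ) :
    ∃ s' ∈ Set.Ici (0 : ℝ), ∀ s ∈ Set.Ici (0 : ℝ), Ccc M x σ s ≤ Ccc M x σ s' := by
  have hσ0 : σ ≠ 0 := (zero_lt_one.trans hσ).ne'
  obtain ⟨s', hs', hmax⟩ := (continuous_Ccc hσ0).continuousOn.exists_isMaxOn_Ici_of_tendsto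
    (tendsto_Ccc_atTop hσ0 hx) (Ccc_zero hσ0).ge
  exact ⟨s', hs', fun s hs => hmax hs⟩

theorem ccsc_global_max (M : ℕ) (hM : 1 ≤ M) (x : Fin M → ℂ)
    (hx : Function.Injective x) (σ : ℝ) (hσ : 1 < σ) :
    ∃ s' ∈ Set.Ici (0 : ℝ), ∀ s ∈ Set.Ici (0 : ℝ), Ccc M x σ s ≤ Ccc M x σ s' :=
  ccsc_global_max_general M x hx σ hσ
end

section
/- For every integer M ≥ 1, every constellation x : Fin M → ℂ, every σ > 0 and every s ≥ 0, the constellation-constrained secrecy capacity is bounded: |C_σ(s)| ≤ log₂ M + log₂ e. -/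
open MeasureTheory Real

/-!
Every `g_i(τ, s)` lies in `[-log₂ e, log₂ M]`, whatever `τ`. All summands are at most `1`, so the
integrand is at most `log₂ M`; the summand `j = i` is at least `exp (-|w|²)`, so the integrand is
at least `-|w|² log₂ e`, whose `γ`-mean is `-log₂ e` because `γ` has second moment `1`.
A difference of two numbers of that interval, and hence an average of such differences, is
bounded by its length.
-/

lemma integral_gaussianC (f : ℂ → ℝ) :
    ∫ w, f w ∂gaussianC = π⁻¹ * ∫ w, f w * exp (-‖w‖ ^ 2) := by
  rw [gaussianC, integral_withDensity_eq_integral_toReal_smul (by fun_prop)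
    (ae_of_all _ fun _ => ENNReal.ofReal_lt_top), ← integral_const_mul]
  congr 1 with w
  rw [ENNReal.toReal_ofReal (by positivity), smul_eq_mul]
  ring

lemma integral_norm_rpow_gaussianC {q : ℝ} (hq : -2 < q) :
    ∫ w, ‖w‖ ^ q ∂gaussianC = Gamma (q / 2 + 1) := by
  have h := Complex.integral_rpow_mul_exp_neg_rpow one_le_two hq
  simp only [rpow_two] at h
  rw [integral_gaussianC, h]
  field_simp

instance isProbabilityMeasure_gaussianC : IsProbabilityMeasure gaussianC := by
  rw [isProbabilityMeasure_iff_real]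
  simpa using integral_norm_rpow_gaussianC (q := 0) (by norm_num)

lemma integral_norm_sq_gaussianC : ∫ w, ‖w‖ ^ 2 ∂gaussianC = 1 := by
  have h := integral_norm_rpow_gaussianC (q := 2) (by norm_num)
  norm_num [rpow_two, Gamma_two] at h
  exact h

section LogSumExp

variable {ι : Type*} [Fintype ι] {b : ℝ}

lemma mul_logb_exp_one_le_logb_sum_exp (hb : 1 < b) (f : ι → ℝ) (i : ι) :
    f i * logb b (exp 1) ≤ logb b (∑ j, exp (f j)) := by
  have h : logb b (exp (f i)) = f i * logb b (exp 1) := by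
    simp only [logb, log_exp]
    ring
  rw [← h]
  exact logb_le_logb_of_le hb (exp_pos _)
    (Finset.single_le_sum (fun j _ => (exp_pos (f j)).le) (Finset.mem_univ i))

lemma logb_sum_exp_le_logb_card [Nonempty ι] (hb : 1 < b) {f : ι → ℝ} (hf : ∀ j, f j ≤ 0) :
    logb b (∑ j, exp (f j)) ≤ logb b (Fintype.card ι) := by
  refine logb_le_logb_of_le hb (Finset.sum_pos (fun j _ => exp_pos _) Finset.univ_nonempty) ?_
  calc ∑ j, exp (f j) ≤ ∑ _j : ι, (1 : ℝ) :=
        Finset.sum_le_sum fun j _ => exp_le_one_iff.mpr (hf j)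
    _ = Fintype.card ι := by simp

end LogSumExp

lemma neg_norm_sq_le_neg_norm_mul_sq_div (τ : ℝ) (w : ℂ) :
    -‖w‖ ^ 2 ≤ -‖(τ : ℂ) * w‖ ^ 2 / τ ^ 2 := by
  have h : ‖(τ : ℂ) * w‖ ^ 2 / τ ^ 2 = ‖w‖ ^ 2 * (τ ^ 2 / τ ^ 2) := by
    rw [norm_mul, Complex.norm_real, norm_eq_abs, mul_pow, sq_abs]
    ring
  rw [neg_div, neg_le_neg_iff, h]
  exact mul_le_of_le_one_right (sq_nonneg _) (div_self_le_one _)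

lemma g_mem_Icc (M : ℕ) (x : Fin M → ℂ) (τ s : ℝ) (i : Fin M) :
    g M x τ s i ∈ Set.Icc (-logb 2 (exp 1)) (logb 2 M) := by
  have : Nonempty (Fin M) := ⟨i⟩
  set e : ℂ → Fin M → ℝ := fun w j => -‖(τ : ℂ) * w + (√s : ℂ) * (x i - x j)‖ ^ 2 / τ ^ 2
  set F : ℂ → ℝ := fun w => logb 2 (∑ j, exp (e w j))
  have hlower : ∀ w, -logb 2 (exp 1) * ‖w‖ ^ 2 ≤ F w := fun w =>
    calc -logb 2 (exp 1) * ‖w‖ ^ 2 ≤ e w i * logb 2 (exp 1) := by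
          rw [neg_mul_comm, mul_comm]
          gcongr
          · exact logb_nonneg one_lt_two (one_le_exp zero_le_one)
          · simpa [e] using neg_norm_sq_le_neg_norm_mul_sq_div τ w
      _ ≤ F w := mul_logb_exp_one_le_logb_sum_exp one_lt_two (e w) i
  have hupper : ∀ w, F w ≤ logb 2 M := fun w => by
    simpa using logb_sum_exp_le_logb_card one_lt_two (f := e w) fun j =>
      div_nonpos_of_nonpos_of_nonneg (neg_nonpos.mpr (sq_nonneg _)) (sq_nonneg τ)
  have hlower_int : Integrable (fun w => -logb 2 (exp 1) * ‖w‖ ^ 2) gaussianC :=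
    (Integrable.of_integral_ne_zero (by simp [integral_norm_sq_gaussianC])).const_mul _
  have hF : Integrable F gaussianC :=
    integrable_of_le_of_le (Measurable.div_const (by fun_prop) (log 2)).aestronglyMeasurable
      (ae_of_all _ hlower) (ae_of_all _ hupper) hlower_int (integrable_const _)
  constructor
  · calc -logb 2 (exp 1) = ∫ w, -logb 2 (exp 1) * ‖w‖ ^ 2 ∂gaussianC := by
          rw [integral_const_mul, integral_norm_sq_gaussianC, mul_one]
      _ ≤ g M x τ s i := integral_mono hlower_int hF hlower
  · calc g M x τ s i ≤ ∫ _, logb 2 M ∂gaussianC := integral_mono hF (integrable_const _) hupper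
      _ = logb 2 M := by simp

lemma abs_inv_card_mul_sum_le {ι : Type*} [Fintype ι] {d : ι → ℝ} {L : ℝ} (hL : 0 ≤ L)
    (hd : ∀ i, |d i| ≤ L) : |1 / (Fintype.card ι : ℝ) * ∑ i, d i| ≤ L := by
  rcases isEmpty_or_nonempty ι with _ | _
  · simpa using hL
  rw [abs_mul, abs_of_nonneg (by positivity), one_div, inv_mul_le_iff₀ (by positivity)]
  calc |∑ i, d i| ≤ ∑ i, |d i| := Finset.abs_sum_le_sum_abs _ _
    _ ≤ ∑ _i : ι, L := Finset.sum_le_sum fun i _ => hd i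
    _ = Fintype.card ι * L := by simp

theorem ccsc_bounded_general (M : ℕ) (x : Fin M → ℂ)
    (σ : ℝ) (s : ℝ) :
    |Ccc M x σ s| ≤ Real.logb 2 M + Real.logb 2 (Real.exp 1) := by
  have hlogM : 0 ≤ logb 2 M := div_nonneg (log_natCast_nonneg M) (log_nonneg one_le_two)
  have hloge : 0 ≤ logb 2 (exp 1) := logb_nonneg one_lt_two (one_le_exp zero_le_one)
  have h := abs_inv_card_mul_sum_le (add_nonneg hlogM hloge) fun i => by
    simpa [Real.dist_eq] using Real.dist_le_of_mem_Icc (g_mem_Icc M x σ s i) (g_mem_Icc M x 1 s i)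
  rwa [Fintype.card_fin] at h

theorem ccsc_bounded (M : ℕ) (hM : 1 ≤ M) (x : Fin M → ℂ)
    (σ : ℝ) (hσ : 0 < σ) (s : ℝ) (hs : 0 ≤ s) :
    |Ccc M x σ s| ≤ Real.logb 2 M + Real.logb 2 (Real.exp 1) :=
  ccsc_bounded_general M x σ s
end
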